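/- arXiv:math/0504607 — 2 statements merged into one kernel-verified Lean document; each statement's English description precedes it below -/
import Mathlib

section
/- For n, r ≥ 4 with r ≤ C(n,2) and n(r−1) − r > (n−2)(r−1): the colorability defect lower bound fails for kg^r_{r-1}(binom([n],2)), i.e., (r−1)·χ(kg^r_{r-1}(binom([n],2))) ≤ (r−1)(n−2) < n(r−1) − r = cd^r_{r-1}(binom([n],2)) whenever r < 2(r−1), which holds for all r ≥ 3. -/
/-- The family of all 2-subsets of `[n] = {1,…,n}`. -/
def pairs (n : ℕ) : Finset (Finset ℕ) := (Finset.Icc 1 n).powersetCard 2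

/-- An edge of the multiplicity-free Kneser hypergraph `kg^r_s(S)`. -/
def kgEdge (r s : ℕ) (S : Finset (Finset ℕ)) (e : Finset (Finset ℕ)) : Prop :=
  e.card = r ∧ e ⊆ S ∧ ∀ i : ℕ, (e.filter fun T => i ∈ T).card ≤ s

/-- The chromatic number of `kg^r_s(S)`. -/
noncomputable def chromkg (r s : ℕ) (S : Finset (Finset ℕ)) : ℕ :=
  sInf {m | ∃ c : Finset ℕ → Fin m,
    ∀ e, kgEdge r s S e → ∃ A ∈ e, ∃ B ∈ e, c A ≠ c B}

/-- The `(s,…,s)`-disjoint `r`-colorability defect over the ground set `[n]`. -/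
noncomputable def cdN (n r s : ℕ) (S : Finset (Finset ℕ)) : ℕ :=
  n * s - sSup {m | ∃ R : Multiset (Finset ℕ),
    Multiset.card R = r ∧
    (∀ A ∈ R, A ⊆ Finset.Icc 1 n) ∧
    (∀ i : ℕ, R.countP (fun A => i ∈ A) ≤ s) ∧
    (∀ A ∈ R, ∀ T ∈ S, ¬ T ⊆ A) ∧
    m = (R.map Finset.card).sum}

/-!
Colour a pair by its least element, merging the colours `n - 2, n - 1` into one. A monochromatic
edge then either has a common point, which `r > r - 1` pairs may not have, or consists of pairs of
`{n - 2, n - 1, n}`, of which there are only three. On the other side, a set containing no pair has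
at most one element, so the best `r` sets reach total size `r`, attained by `r - 1` copies of `{1}`
and one `{2}`.
-/

lemma kgEdge.not_forall_mem {r s : ℕ} {S e : Finset (Finset ℕ)} (he : kgEdge r s S e)
    (hsr : s < r) (i : ℕ) : ¬ ∀ T ∈ e, i ∈ T := by
  intro h
  have hi := he.2.2 i
  rw [Finset.filter_true_of_mem h, he.1] at hi
  omega

lemma sInf_mem_of_mem_pairs {n : ℕ} {T : Finset ℕ} (hT : T ∈ pairs n) :
    sInf (T : Set ℕ) ∈ T ∧ 1 ≤ sInf (T : Set ℕ) ∧ T ⊆ Finset.Icc (sInf (T : Set ℕ)) n := by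
  rw [pairs, Finset.mem_powersetCard] at hT
  have hne : (T : Set ℕ).Nonempty := Finset.coe_nonempty.mpr (Finset.card_pos.mp (by omega))
  have hmem : sInf (T : Set ℕ) ∈ T := Nat.sInf_mem hne
  refine ⟨hmem, (Finset.mem_Icc.mp (hT.1 hmem)).1, fun x hx => Finset.mem_Icc.mpr ⟨?_, ?_⟩⟩
  · exact Nat.sInf_le (Finset.mem_coe.mpr hx)
  · exact (Finset.mem_Icc.mp (hT.1 hx)).2

noncomputable def pairColor (n : ℕ) (T : Finset ℕ) : Fin (n - 3 + 1) :=
  ⟨min (sInf (T : Set ℕ) - 1) (n - 3), Nat.lt_succ_of_le (min_le_right _ _)⟩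

lemma card_pairs_Icc_le_three (n : ℕ) : ((Finset.Icc (n - 2) n).powersetCard 2).card ≤ 3 := by
  rw [Finset.card_powersetCard, Nat.card_Icc]
  calc (n + 1 - (n - 2)).choose 2 ≤ Nat.choose 3 2 := Nat.choose_le_choose 2 (by omega)
    _ = 3 := rfl

lemma chromkg_pairs_le {n r s : ℕ} (hsr : s < r) (hr : 4 ≤ r) :
    chromkg r s (pairs n) ≤ n - 3 + 1 := by
  refine Nat.sInf_le ⟨pairColor n, fun e he => ?_⟩
  by_contra! hmono
  obtain ⟨T₀, hT₀⟩ : e.Nonempty := Finset.card_pos.mp (by rw [he.1]; omega)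
  have hcolor : ∀ T ∈ e, (pairColor n T : ℕ) = pairColor n T₀ :=
    fun T hT => congrArg Fin.val (hmono T hT T₀ hT₀)
  by_cases hlow : (pairColor n T₀ : ℕ) < n - 3
  · refine he.not_forall_mem hsr (pairColor n T₀ + 1) fun T hT => ?_
    obtain ⟨hmem, hpos, -⟩ := sInf_mem_of_mem_pairs (he.2.1 hT)
    have hcT := hcolor T hT
    simp only [pairColor] at hcT hlow ⊢
    convert hmem using 1
    omega
  · have hsub : e ⊆ (Finset.Icc (n - 2) n).powersetCard 2 := by
      intro T hT
      obtain ⟨-, hpos, hIcc⟩ := sInf_mem_of_mem_pairs (he.2.1 hT)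
      have hcT := hcolor T hT
      simp only [pairColor] at hcT hlow
      refine Finset.mem_powersetCard.mpr ⟨hIcc.trans (Finset.Icc_subset_Icc (by omega) le_rfl), ?_⟩
      exact (Finset.mem_powersetCard.mp (he.2.1 hT)).2
    have := (Finset.card_le_card hsub).trans (card_pairs_Icc_le_three n)
    rw [he.1] at this
    omega

def defectSizes (n r s : ℕ) (S : Finset (Finset ℕ)) : Set ℕ :=
  {m | ∃ R : Multiset (Finset ℕ),
    Multiset.card R = r ∧
    (∀ A ∈ R, A ⊆ Finset.Icc 1 n) ∧
    (∀ i : ℕ, R.countP (fun A => i ∈ A) ≤ s) ∧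
    (∀ A ∈ R, ∀ T ∈ S, ¬ T ⊆ A) ∧
    m = (R.map Finset.card).sum}

lemma cdN_eq (n r s : ℕ) (S : Finset (Finset ℕ)) :
    cdN n r s S = n * s - sSup (defectSizes n r s S) := rfl

lemma card_le_one_of_forall_pairs_not_subset {n : ℕ} {A : Finset ℕ}
    (hA : A ⊆ Finset.Icc 1 n) (h : ∀ T ∈ pairs n, ¬ T ⊆ A) : A.card ≤ 1 := by
  by_contra! hcard
  obtain ⟨T, hTA, hT⟩ := Finset.exists_subset_card_eq (show 2 ≤ A.card by omega)
  exact h T (Finset.mem_powersetCard.mpr ⟨hTA.trans hA, hT⟩) hTA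

lemma isGreatest_defectSizes_pairs {n r : ℕ} (hn : 2 ≤ n) (hr : 2 ≤ r) :
    IsGreatest (defectSizes n r (r - 1) (pairs n)) r := by
  constructor
  · refine ⟨{2} ::ₘ Multiset.replicate (r - 1) {1}, ?_, ?_, fun i => ?_, ?_, ?_⟩
    · rw [Multiset.card_cons, Multiset.card_replicate]
      omega
    · simp only [Multiset.mem_cons, Multiset.mem_replicate]
      rintro A (rfl | ⟨-, rfl⟩) <;> simp only [Finset.singleton_subset_iff, Finset.mem_Icc] <;> omega
    · rw [Multiset.countP_cons, ← Multiset.coe_replicate, Multiset.coe_countP,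
        List.countP_replicate]
      by_cases hi : i = 1
      · simp [hi]
      · simp only [Finset.mem_singleton, hi, decide_false, Bool.false_eq_true, ↓reduceIte]
        split_ifs <;> omega
    · simp only [Multiset.mem_cons, Multiset.mem_replicate]
      rintro A (rfl | ⟨-, rfl⟩) T hT hTA <;>
      · have := Finset.card_le_card hTA
        rw [(Finset.mem_powersetCard.mp hT).2, Finset.card_singleton] at this
        omega
    · simp only [Multiset.map_cons, Finset.card_singleton, Multiset.map_replicate,
        Multiset.sum_cons, Multiset.sum_replicate, smul_eq_mul, mul_one]
      omega
  · rintro m ⟨R, hcard, hsub, -, hfree, rfl⟩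
    calc (R.map Finset.card).sum ≤ Multiset.card (R.map Finset.card) • 1 :=
          Multiset.sum_le_card_nsmul _ _ fun k hk => by
            obtain ⟨A, hA, rfl⟩ := Multiset.mem_map.mp hk
            exact card_le_one_of_forall_pairs_not_subset (hsub A hA) (hfree A hA)
      _ = r := by rw [Multiset.card_map, hcard, smul_eq_mul, mul_one]

lemma cdN_pairs {n r : ℕ} (hn : 2 ≤ n) (hr : 2 ≤ r) :
    cdN n r (r - 1) (pairs n) = n * (r - 1) - r := by
  rw [cdN_eq, (isGreatest_defectSizes_pairs hn hr).csSup_eq]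

lemma pred_mul_sub_two_lt {n r : ℕ} (hn : 2 ≤ n) (hr : 3 ≤ r) :
    (r - 1) * (n - 2) < n * (r - 1) - r := by
  obtain ⟨m, rfl⟩ := Nat.exists_eq_add_of_le hn
  obtain ⟨k, rfl⟩ := Nat.exists_eq_add_of_le hr
  simp only [Nat.add_sub_cancel_left]
  ring_nf
  omega

theorem stmt16_general (n r : ℕ) (hn : 4 ≤ n) (hr : 4 ≤ r) :
    (r - 1) * chromkg r (r - 1) (pairs n) ≤ (r - 1) * (n - 2) ∧
    (r - 1) * (n - 2) < n * (r - 1) - r ∧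
    cdN n r (r - 1) (pairs n) = n * (r - 1) - r := by
  have hchrom : chromkg r (r - 1) (pairs n) ≤ n - 3 + 1 := chromkg_pairs_le (by omega) hr
  exact ⟨Nat.mul_le_mul_left _ (by omega), pred_mul_sub_two_lt (by omega) (by omega),
    cdN_pairs (by omega) (by omega)⟩

/-- For `n, r ≥ 4` with `r ≤ C(n,2)`, the colorability defect lower bound fails
for `kg^r_{r-1}(binom([n],2))`:
`(r-1)·χ(kg^r_{r-1}(binom([n],2))) ≤ (r-1)(n-2) < n(r-1) - r = cd^r_{r-1}(binom([n],2))`. -/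
theorem stmt16 (n r : ℕ) (hn : 4 ≤ n) (hr : 4 ≤ r) (hrc : r ≤ n.choose 2) :
    (r - 1) * chromkg r (r - 1) (pairs n) ≤ (r - 1) * (n - 2) ∧
    (r - 1) * (n - 2) < n * (r - 1) - r ∧
    cdN n r (r - 1) (pairs n) = n * (r - 1) - r :=
  stmt16_general n r hn hr
end

section
/- Let k=2, and let r, s satisfy r/2 ≤ s < r−1 (so ⌊(r−1)/s⌋ = 1). Then for n large enough that the hypergraph is nonempty, χ(KG^r_s(binom([n],2))) = 1 + n − ⌊(2r−1)/s⌋; explicitly, the chromatic number is n−1 when 2r/3 ≤ s ≤ r−2, and n−2 when r/2 ≤ s < 2r/3. -/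
/-- An edge of the Kneser hypergraph with multiplicities `KG^r_s(S)`:
an `r`-multiset of members of `S` in which each ground element occurs
(with multiplicity) in at most `s` of the sets. -/
def KGEdge (r s : ℕ) (S : Finset (Finset ℕ)) (e : Multiset (Finset ℕ)) : Prop :=
  Multiset.card e = r ∧ (∀ A ∈ e, A ∈ S) ∧
    ∀ i : ℕ, e.countP (fun T => i ∈ T) ≤ s

/-- The chromatic number of `KG^r_s(S)`. -/
noncomputable def chromKG (r s : ℕ) (S : Finset (Finset ℕ)) : ℕ :=
  sInf {m | ∃ c : Finset ℕ → Fin m,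
    ∀ e, KGEdge r s S e → ∃ A ∈ e, ∃ B ∈ e, c A ≠ c B}

/-!
Two disjoint pairs `A`, `B` of the same colour would carry the monochromatic edge
`s • A + (r - s) • B`, so every colour class is an intersecting family of pairs: a star or
a triangle. When `2r ≤ 3s` a triangle carries an edge too, so all classes are stars and
the at most one vertex that is not a centre gives `n ≤ m + 1`; otherwise the vertices that
are not star centres span at most three pairs per triangle class, whence `n ≤ m + 2`.
Conversely, colouring a pair by its largest element and merging the pairs inside `[2]`
(resp. `[3]`) into one class is proper: a star carries no edge because `s < r`, and a set
of `t` vertices with `t * s < 2 * r` carries none by double counting.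
-/

open Finset

theorem Multiset.countP_replicate {α : Type*} (p : α → Prop) [DecidablePred p] (k : ℕ) (a : α) :
    (replicate k a).countP p = if p a then k else 0 := by
  split_ifs with h
  · rw [countP_eq_card.2 fun b hb => eq_of_mem_replicate hb ▸ h, card_replicate]
  · exact countP_eq_zero.2 fun b hb => eq_of_mem_replicate hb ▸ h

theorem Finset.sum_countP_mem {α : Type*} [DecidableEq α] (T : Finset α)
    (e : Multiset (Finset α)) :
    ∑ i ∈ T, e.countP (i ∈ ·) = (e.map fun A => #(T ∩ A)).sum := by
  induction e using Multiset.induction_on with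
  | empty => simp
  | cons a e ih =>
    simp only [Multiset.countP_cons, sum_add_distrib, ih, Multiset.map_cons, Multiset.sum_cons,
      sum_boole, filter_mem_eq_inter, Nat.cast_id]
    ring

theorem Finset.exists_eq_pair_of_mem {α : Type*} [DecidableEq α] {B : Finset α} {b : α}
    (hB : #B = 2) (hb : b ∈ B) : ∃ d, d ≠ b ∧ B = {b, d} := by
  obtain ⟨x, y, hxy, rfl⟩ := card_eq_two.1 hB
  rcases mem_insert.1 hb with rfl | hb
  · exact ⟨y, hxy.symm, rfl⟩
  · rw [mem_singleton.1 hb]; exact ⟨x, hxy, pair_comm _ _⟩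

theorem Set.Intersecting.exists_forall_mem_or_triangle {α : Type*} [DecidableEq α] [Nonempty α]
    {F : Set (Finset α)} (hF : F.Intersecting) (hF2 : ∀ A ∈ F, #A = 2) :
    (∃ v, ∀ A ∈ F, v ∈ A) ∨ ∃ a b d, a ≠ b ∧ a ≠ d ∧ b ≠ d ∧
      {a, b} ∈ F ∧ {b, d} ∈ F ∧ {a, d} ∈ F ∧ ∀ A ∈ F, A ⊆ {a, b, d} := by
  have meet {A B} (hA : A ∈ F) (hB : B ∈ F) : ∃ x ∈ A, x ∈ B :=
    Finset.not_disjoint_iff.1 (hF hA hB)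
  by_contra! h
  obtain ⟨nostar, notri⟩ := h
  obtain ⟨A, hA, -⟩ := nostar (Classical.arbitrary α)
  obtain ⟨a, b, hab, rfl⟩ := card_eq_two.1 (hF2 A hA)
  obtain ⟨B, hB, haB⟩ := nostar a
  obtain ⟨C, hC, hbC⟩ := nostar b
  obtain ⟨d, hdb, rfl⟩ := exists_eq_pair_of_mem (hF2 B hB) (b := b) (by grind [meet hA hB])
  obtain ⟨d', hda, rfl⟩ := exists_eq_pair_of_mem (hF2 C hC) (b := a) (by grind [meet hA hC])
  obtain rfl : d' = d := by grind [meet hB hC]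
  obtain ⟨D, hD, hDsub⟩ := notri a b d' hab (by grind) hdb.symm hA hB hC
  obtain ⟨z, hzD, hz⟩ := not_subset.1 hDsub
  obtain ⟨w, -, rfl⟩ := exists_eq_pair_of_mem (hF2 D hD) hzD
  grind [meet hD hA, meet hD hB, meet hD hC]

theorem Nat.three_mul_sub_two_le_choose_two (u : ℕ) : 3 * (u - 2) ≤ u.choose 2 := by
  induction u with
  | zero => simp
  | succ u ih =>
    have : (u + 1).choose 2 = u.choose 1 + u.choose 2 := Nat.choose_succ_succ' u 1
    rw [Nat.choose_one_right] at this
    rcases Nat.lt_or_ge u 3 with hu | hu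
    · interval_cases u <;> decide
    · omega

theorem Finset.card_le_card_add_one_of_pairs_meet {α : Type*} [DecidableEq α] {V W : Finset α}
    (h : ∀ x ∈ V, ∀ y ∈ V, x ≠ y → x ∈ W ∨ y ∈ W) : #V ≤ #W + 1 := by
  have : #(V \ W) ≤ 1 := card_le_one.2 fun x hx y hy => by
    by_contra hxy
    simp only [mem_sdiff] at hx hy
    grind
  have : #V ≤ #(V \ W) + #W := card_le_card_sdiff_add_card
  omega

theorem Finset.card_le_card_add_card_add_two_of_pairs_meet_or_subset {α : Type*} [DecidableEq α]
    {V W : Finset α} {𝒯 : Finset (Finset α)} (h𝒯 : ∀ T ∈ 𝒯, #T ≤ 3)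
    (h : ∀ x ∈ V, ∀ y ∈ V, x ≠ y → x ∈ W ∨ y ∈ W ∨ ∃ T ∈ 𝒯, x ∈ T ∧ y ∈ T) :
    #V ≤ #W + #𝒯 + 2 := by
  set U := V \ W
  have hsub : U.powersetCard 2 ⊆ 𝒯.biUnion (powersetCard 2) := by
    intro P hP
    obtain ⟨hPU, hP2⟩ := mem_powersetCard.1 hP
    obtain ⟨x, y, hxy, rfl⟩ := card_eq_two.1 hP2
    have hx := hPU (mem_insert_self x {y})
    have hy := hPU (mem_insert_of_mem (mem_singleton_self y))
    simp only [U, mem_sdiff] at hx hy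
    obtain ⟨T, hT, hxT, hyT⟩ := (h x hx.1 y hy.1 hxy).resolve_left hx.2 |>.resolve_left hy.2
    exact mem_biUnion.2 ⟨T, hT, mem_powersetCard.2 ⟨insert_subset hxT (by simpa), hP2⟩⟩
  have hpairs : (#U).choose 2 ≤ #𝒯 * 3 := by
    rw [← card_powersetCard]
    refine (card_le_card hsub).trans (card_biUnion_le_card_mul _ _ _ fun T hT => ?_)
    rw [card_powersetCard]
    exact Nat.choose_le_choose 2 (h𝒯 T hT)
  have := Nat.three_mul_sub_two_le_choose_two #U
  have : #V ≤ #U + #W := card_le_card_sdiff_add_card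
  omega

theorem mem_pairs {n : ℕ} {A : Finset ℕ} : A ∈ pairs n ↔ A ⊆ Icc 1 n ∧ #A = 2 :=
  mem_powersetCard

theorem insert_mem_pairs {n x y : ℕ} (hx : x ∈ Icc 1 n) (hy : y ∈ Icc 1 n) (hxy : x ≠ y) :
    {x, y} ∈ pairs n :=
  mem_pairs.2 ⟨insert_subset hx (singleton_subset_iff.2 hy), card_pair hxy⟩

theorem sup_mem_of_mem_pairs {n : ℕ} {A : Finset ℕ} (hA : A ∈ pairs n) : A.sup id ∈ A := by
  obtain ⟨x, hx, hsup⟩ := exists_mem_eq_sup A (card_pos.1 (by rw [(mem_pairs.1 hA).2]; omega)) id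
  exact hsup ▸ hx

theorem sup_le_of_mem_pairs {n : ℕ} {A : Finset ℕ} (hA : A ∈ pairs n) : A.sup id ≤ n :=
  Finset.sup_le fun _ hx => (mem_Icc.1 ((mem_pairs.1 hA).1 hx)).2

section Edges

variable {r s : ℕ} {S : Finset (Finset ℕ)} {e : Multiset (Finset ℕ)}

theorem KGEdge.le_of_forall_mem (he : KGEdge r s S e) {v : ℕ} (hv : ∀ A ∈ e, v ∈ A) : r ≤ s := by
  have := he.2.2 v
  rwa [Multiset.countP_eq_card.2 hv, he.1] at this

theorem KGEdge.two_mul_le_card_mul (he : KGEdge r s S e) (hS : ∀ A ∈ S, #A = 2)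
    {T : Finset ℕ} (hT : ∀ A ∈ e, A ⊆ T) : 2 * r ≤ #T * s := by
  obtain ⟨hcard, heS, hcount⟩ := he
  calc 2 * r = (e.map fun A => #(T ∩ A)).sum := by
        rw [Multiset.map_congr rfl fun A hA => by rw [inter_eq_right.2 (hT A hA), hS A (heS A hA)],
          Multiset.map_const', Multiset.sum_replicate, hcard, smul_eq_mul, mul_comm]
    _ = ∑ i ∈ T, e.countP (i ∈ ·) := (sum_countP_mem T e).symm
    _ ≤ #T * s := by simpa using sum_le_card_nsmul T _ s fun i _ => hcount i

theorem KGEdge.three_le {n : ℕ} (he : KGEdge r s (pairs n) e) (hsr : s < r) : 3 ≤ n := by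
  by_contra! hn
  have := he.two_mul_le_card_mul (fun A hA => (mem_pairs.1 hA).2)
    fun A hA => (mem_pairs.1 (he.2.1 A hA)).1
  rw [Nat.card_Icc, Nat.add_sub_cancel] at this
  have : n * s ≤ 2 * s := Nat.mul_le_mul_right s (by omega)
  omega

theorem kgEdge_replicate_add_replicate (h1 : r ≤ 2 * s) (h2 : s ≤ r) {A B : Finset ℕ}
    (hA : A ∈ S) (hB : B ∈ S) (hAB : Disjoint A B) :
    KGEdge r s S (.replicate s A + .replicate (r - s) B) := by
  refine ⟨by simp only [Multiset.card_add, Multiset.card_replicate]; omega, ?_, fun i => ?_⟩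
  · simp only [Multiset.mem_add, Multiset.mem_replicate]
    rintro X (⟨-, rfl⟩ | ⟨-, rfl⟩) <;> assumption
  · simp only [Multiset.countP_add, Multiset.countP_replicate]
    have : i ∈ A → i ∉ B := fun h => disjoint_left.1 hAB h
    split_ifs <;> grind

/-- Each point lies in at most two of `A`, `B`, `C`, hence in at most `r - r / 3 ≤ s` members. -/
theorem kgEdge_replicate_triangle (h3 : 2 * r ≤ 3 * s) {A B C : Finset ℕ}
    (hA : A ∈ S) (hB : B ∈ S) (hC : C ∈ S) (hABC : ∀ x ∈ A, x ∈ B → x ∉ C) :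
    KGEdge r s S
      (.replicate (r / 3) A + .replicate (r / 3) B + .replicate (r - 2 * (r / 3)) C) := by
  refine ⟨by simp only [Multiset.card_add, Multiset.card_replicate]; omega, ?_, fun i => ?_⟩
  · simp only [Multiset.mem_add, Multiset.mem_replicate]
    rintro X ((⟨-, rfl⟩ | ⟨-, rfl⟩) | ⟨-, rfl⟩) <;> assumption
  · simp only [Multiset.countP_add, Multiset.countP_replicate]
    have := hABC i
    split_ifs <;> grind

end Edges

def IsKGColoring (r s : ℕ) (S : Finset (Finset ℕ)) {m : ℕ} (c : Finset ℕ → Fin m) : Prop :=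
  ∀ e, KGEdge r s S e → ∃ A ∈ e, ∃ B ∈ e, c A ≠ c B

theorem chromKG_eq_of_forall_le {r s k : ℕ} {S : Finset (Finset ℕ)}
    (hk : ∃ c : Finset ℕ → Fin k, IsKGColoring r s S c)
    (hle : ∀ m (c : Finset ℕ → Fin m), IsKGColoring r s S c → k ≤ m) : chromKG r s S = k :=
  IsLeast.csInf_eq ⟨hk, fun m ⟨c, hc⟩ => hle m c hc⟩

section Colorings

variable {r s m : ℕ} {S : Finset (Finset ℕ)} {c : Finset ℕ → Fin m}

theorem IsKGColoring.not_forall_eq (hc : IsKGColoring r s S c) {e : Multiset (Finset ℕ)}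
    (he : KGEdge r s S e) (i : Fin m) : ¬ ∀ A ∈ e, c A = i := fun h => by
  obtain ⟨A, hA, B, hB, hAB⟩ := hc e he
  exact hAB ((h A hA).trans (h B hB).symm)

theorem IsKGColoring.intersecting (hc : IsKGColoring r s S c) (h1 : r ≤ 2 * s) (h2 : s ≤ r)
    (i : Fin m) : Set.Intersecting {A | A ∈ S ∧ c A = i} := by
  rintro A ⟨hA, rfl⟩ B ⟨hB, hBA⟩ hAB
  refine hc.not_forall_eq (kgEdge_replicate_add_replicate h1 h2 hA hB hAB) (c A) ?_
  simp only [Multiset.mem_add, Multiset.mem_replicate]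
  rintro X (⟨-, rfl⟩ | ⟨-, rfl⟩)
  exacts [rfl, hBA]

theorem IsKGColoring.not_triangle (hc : IsKGColoring r s S c) (h3 : 2 * r ≤ 3 * s)
    {A B C : Finset ℕ} (hA : A ∈ S) (hB : B ∈ S) (hC : C ∈ S) (hBA : c B = c A)
    (hCA : c C = c A) (hABC : ∀ x ∈ A, x ∈ B → x ∉ C) : False := by
  refine hc.not_forall_eq (kgEdge_replicate_triangle h3 hA hB hC hABC) (c A) ?_
  simp only [Multiset.mem_add, Multiset.mem_replicate]
  rintro X ((⟨-, rfl⟩ | ⟨-, rfl⟩) | ⟨-, rfl⟩)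
  exacts [rfl, hBA, hCA]

theorem IsKGColoring.le_add_one {n : ℕ} (hc : IsKGColoring r s (pairs n) c) (h1 : r ≤ 2 * s)
    (h2 : s ≤ r) (h3 : 2 * r ≤ 3 * s) : n ≤ m + 1 := by
  have hstar (i : Fin m) : ∃ v, ∀ A ∈ pairs n, c A = i → v ∈ A := by
    rcases (hc.intersecting h1 h2 i).exists_forall_mem_or_triangle
      (fun A hA => (mem_pairs.1 hA.1).2) with ⟨v, hv⟩ | ⟨a, b, d, hab, had, hbd, hA, hB, hC, -⟩
    · exact ⟨v, fun A hA hcA => hv A ⟨hA, hcA⟩⟩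
    · refine (hc.not_triangle h3 hA.1 hB.1 hC.1 (hB.2.trans hA.2.symm) (hC.2.trans hA.2.symm)
        ?_).elim
      simp only [mem_insert, mem_singleton]
      grind
  choose f hf using hstar
  calc n = #(Icc 1 n) := by simp
    _ ≤ #(univ.image f) + 1 := card_le_card_add_one_of_pairs_meet fun x hx y hy hxy => ?_
    _ ≤ m + 1 := by grw [card_image_le]; simp
  have := hf _ _ (insert_mem_pairs hx hy hxy) rfl
  simp only [mem_insert, mem_singleton] at this
  rcases this with h | h
  · exact .inl (h ▸ mem_image_of_mem f (mem_univ _))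
  · exact .inr (h ▸ mem_image_of_mem f (mem_univ _))

theorem IsKGColoring.le_add_two {n : ℕ} (hc : IsKGColoring r s (pairs n) c) (h1 : r ≤ 2 * s)
    (h2 : s ≤ r) : n ≤ m + 2 := by
  classical
  have hshape (i : Fin m) : ∃ v T, (∀ A ∈ pairs n, c A = i → v ∈ A) ∨
      (#T ≤ 3 ∧ ∀ A ∈ pairs n, c A = i → A ⊆ T) := by
    rcases (hc.intersecting h1 h2 i).exists_forall_mem_or_triangle
      (fun A hA => (mem_pairs.1 hA.1).2) with ⟨v, hv⟩ | ⟨a, b, d, -, -, -, -, -, -, hsub⟩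
    · exact ⟨v, ∅, .inl fun A hA hcA => hv A ⟨hA, hcA⟩⟩
    · exact ⟨0, {a, b, d}, .inr ⟨card_le_three, fun A hA hcA => hsub A ⟨hA, hcA⟩⟩⟩
  choose f T hfT using hshape
  set stars := univ.filter fun i => ∀ A ∈ pairs n, c A = i → f i ∈ A
  calc n = #(Icc 1 n) := by simp
    _ ≤ #(stars.image f) + #(starsᶜ.image T) + 2 :=
        card_le_card_add_card_add_two_of_pairs_meet_or_subset ?_ ?_
    _ ≤ #stars + #starsᶜ + 2 := by grw [card_image_le, card_image_le]
    _ = m + 2 := by rw [card_add_card_compl, Fintype.card_fin]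
  · simp only [mem_image, forall_exists_index, and_imp, forall_apply_eq_imp_iff₂]
    intro i hi
    exact ((hfT i).resolve_left (by simpa [stars] using hi)).1
  · intro x hx y hy hxy
    have hxy' := insert_mem_pairs hx hy hxy
    by_cases hi : c {x, y} ∈ stars
    · have := (mem_filter.1 hi).2 _ hxy' rfl
      simp only [mem_insert, mem_singleton] at this
      rcases this with h | h
      · exact .inl (h ▸ mem_image_of_mem f hi)
      · exact .inr (.inl (h ▸ mem_image_of_mem f hi))
    · have := ((hfT _).resolve_left (by simpa [stars] using hi)).2 _ hxy' rfl
      exact .inr (.inr ⟨_, mem_image_of_mem T (mem_compl.2 hi), this (by simp), this (by simp)⟩)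

end Colorings

theorem isKGColoring_of_forall_star_or_small {r s m : ℕ} {S : Finset (Finset ℕ)}
    {c : Finset ℕ → Fin m} (hsr : s < r) (hS : ∀ A ∈ S, #A = 2)
    (h : ∀ i, (∃ v, ∀ A ∈ S, c A = i → v ∈ A) ∨
      ∃ T : Finset ℕ, #T * s < 2 * r ∧ ∀ A ∈ S, c A = i → A ⊆ T) :
    IsKGColoring r s S c := by
  intro e he
  by_contra! hmono
  obtain ⟨A₀, hA₀⟩ := Multiset.card_pos_iff_exists_mem.1 (he.1 ▸ (by omega : 0 < r))
  have hcol (A) (hA : A ∈ e) : c A = c A₀ := hmono A hA A₀ hA₀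
  rcases h (c A₀) with ⟨v, hv⟩ | ⟨T, hTs, hT⟩
  · have := he.le_of_forall_mem fun A hA => hv A (he.2.1 A hA) (hcol A hA)
    omega
  · have := he.two_mul_le_card_mul hS fun A hA => hT A (he.2.1 A hA) (hcol A hA)
    omega

/-- Colour `i > 0` is the star of pairs with largest element `i + j + 1`; colour `0` collects the
pairs inside `[j + 1]`. The `min` only matters off `pairs n`. -/
def supColoring (n j : ℕ) (hj : j < n) (A : Finset ℕ) : Fin (n - j) :=
  ⟨min (A.sup id - (j + 1)) (n - (j + 1)), by omega⟩

theorem isKGColoring_supColoring {r s n j : ℕ} (hj : j < n) (hsr : s < r)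
    (hjs : (j + 1) * s < 2 * r) : IsKGColoring r s (pairs n) (supColoring n j hj) := by
  refine isKGColoring_of_forall_star_or_small hsr (fun A hA => (mem_pairs.1 hA).2) fun i => ?_
  have hval {A} (hA : A ∈ pairs n) (hcA : supColoring n j hj A = i) : A.sup id - (j + 1) = i := by
    have := congrArg Fin.val hcA
    have := sup_le_of_mem_pairs hA
    simp only [supColoring] at *
    omega
  rcases eq_or_ne (i : ℕ) 0 with hi | hi
  · refine .inr ⟨Icc 1 (j + 1), by simpa using hjs, fun A hA hcA x hx => ?_⟩
    have := hval hA hcA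
    have := le_sup (f := id) hx
    have := mem_Icc.1 ((mem_pairs.1 hA).1 hx)
    simp only [id, mem_Icc] at *
    omega
  · refine .inl ⟨i + (j + 1), fun A hA hcA => ?_⟩
    have := hval hA hcA
    rw [show (i : ℕ) + (j + 1) = A.sup id by omega]
    exact sup_mem_of_mem_pairs hA

/-- For `k = 2` and `r/2 ≤ s < r-1` (so `⌊(r-1)/s⌋ = 1`), and `n` large enough
that the hypergraph is nonempty:
`χ(KG^r_s(binom([n],2))) = 1 + n - ⌊(2r-1)/s⌋`; explicitly, it is `n-1` if
`2r/3 ≤ s` and `n-2` if `s < 2r/3`. -/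
theorem stmt17 (n r s : ℕ) (h1 : r ≤ 2 * s) (h2 : s + 1 < r)
    (hne : ∃ e, KGEdge r s (pairs n) e) :
    chromKG r s (pairs n) = 1 + n - (2 * r - 1) / s ∧
    (2 * r ≤ 3 * s → chromKG r s (pairs n) = n - 1) ∧
    (3 * s < 2 * r → chromKG r s (pairs n) = n - 2) := by
  obtain ⟨e, he⟩ := hne
  have hn : 3 ≤ n := he.three_le (by omega)
  have hstar (h3 : 2 * r ≤ 3 * s) : chromKG r s (pairs n) = n - 1 :=
    chromKG_eq_of_forall_le ⟨_, isKGColoring_supColoring (j := 1) (by omega) (by omega) (by omega)⟩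
      fun m c hc => by have := hc.le_add_one h1 (by omega) h3; omega
  have htri (h3 : 3 * s < 2 * r) : chromKG r s (pairs n) = n - 2 :=
    chromKG_eq_of_forall_le ⟨_, isKGColoring_supColoring (j := 2) (by omega) (by omega) (by omega)⟩
      fun m c hc => by have := hc.le_add_two h1 (by omega); omega
  refine ⟨?_, hstar, htri⟩
  rcases le_or_gt (2 * r) (3 * s) with h3 | h3
  · rw [hstar h3, Nat.div_eq_of_lt_le (k := 2) (by omega) (by omega)]
    omega
  · rw [htri h3, Nat.div_eq_of_lt_le (k := 3) (by omega) (by omega)]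
    omega
end
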